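/- Let B be the unweighted backward shift on l^∞(ℕ) and let λ ∈ ℂ with |λ| > 2. Then J_{I+λB}^mix(0) = l^∞(ℕ), i.e. for every y ∈ l^∞(ℕ) there exists a sequence (w^{(n)}) in l^∞(ℕ) with w^{(n)} → 0 and (I+λB)^n w^{(n)} → y. -/

import Mathlib

open Filter Topology
open scoped ENNReal

/-- The unweighted backward shift on `l^∞(ℕ)`, the space of bounded sequences of
complex numbers with the supremum norm. -/
noncomputable def backwardShift : lp (fun _ : ℕ => ℂ) ∞ →L[ℂ] lp (fun _ : ℕ => ℂ) ∞ :=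
  LinearMap.mkContinuous
    { toFun := fun x => ⟨fun n => x (n + 1), memℓp_infty ⟨‖x‖, by
        rintro r ⟨n, rfl⟩
        exact lp.norm_apply_le_norm ENNReal.top_ne_zero x (n + 1)⟩⟩
      map_add' := fun x y => by ext n; exact congrFun rfl n
      map_smul' := fun c x => by ext n; rfl }
    1
    (fun x => by
      rw [one_mul]
      apply lp.norm_le_of_forall_le (norm_nonneg x)
      intro n
      exact lp.norm_apply_le_norm ENNReal.top_ne_zero x (n + 1))

/-- The extended mixing limit set `J_T^mix(x)`: all `y` for which there exists a
sequence `(x_n)` with `x_n → x` and `T^n x_n → y`. -/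
noncomputable def Jmix {X : Type*} [SeminormedAddCommGroup X] [NormedSpace ℂ X]
    (T : X →L[ℂ] X) (x : X) : Set X :=
  {y | ∃ u : ℕ → X, Tendsto u atTop (𝓝 x) ∧ Tendsto (fun n => (T ^ n) (u n)) atTop (𝓝 y)}

/-!
The forward shift `F` is a right inverse of `B` of norm at most `1`. For `q = λ⁻¹F` this gives
`(I + λB) q = I + q`, so `S = q (I + q)⁻¹` is a right inverse of `I + λB` with
`‖S‖ ≤ ‖q‖ / (1 - ‖q‖) < 1` as soon as `|λ| > 2`. Then `w_n = Sⁿ y → 0` while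
`(I + λB)ⁿ w_n = y` for every `n`.
-/

theorem Jmix_zero_eq_univ_of_mul_eq_one {X : Type*} [SeminormedAddCommGroup X] [NormedSpace ℂ X]
    {T S : X →L[ℂ] X} (hTS : T * S = 1) (hS : ‖S‖ < 1) : Jmix T 0 = Set.univ := by
  refine Set.eq_univ_of_forall fun y => ⟨fun n => (S ^ n) y, ?_, ?_⟩
  · have h := ((ContinuousLinearMap.apply ℂ X y).continuous.tendsto 0).comp
      (tendsto_pow_atTop_nhds_zero_of_norm_lt_one hS)
    rwa [map_zero] at h
  · refine tendsto_const_nhds.congr fun n => ?_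
    rw [← mul_apply_eq_comp, pow_mul_pow_eq_one n hTS, one_apply_eq_self]

theorem exists_norm_lt_one_rightInverse_one_add_smul {𝕜 A : Type*} [NormedField 𝕜] [NormedRing A]
    [NormedAlgebra 𝕜 A] [NormOneClass A] [HasSummableGeomSeries A] {b f : A} (hbf : b * f = 1)
    {c : 𝕜} (hc : 2 * ‖f‖ < ‖c‖) : ∃ s : A, (1 + c • b) * s = 1 ∧ ‖s‖ < 1 := by
  have hc0 : c ≠ 0 := norm_pos_iff.mp ((mul_nonneg zero_le_two (norm_nonneg f)).trans_lt hc)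
  set q := c⁻¹ • f
  have hq : ‖q‖ < 1 / 2 := by
    rw [norm_smul, norm_inv, inv_mul_lt_iff₀ (norm_pos_iff.mpr hc0)]
    linarith
  have hq1 : ‖-q‖ < 1 := by rw [norm_neg]; linarith
  have hmul : (1 + c • b) * q = 1 + q := by
    rw [add_mul, one_mul, smul_mul_smul_comm, mul_inv_cancel₀ hc0, hbf, one_smul, add_comm]
  set u := Units.oneSub (-q) hq1
  refine ⟨q * ↑u⁻¹, ?_, ?_⟩
  · rw [← mul_assoc, hmul, ← sub_neg_eq_add, ← Units.val_oneSub (-q) hq1, Units.mul_inv]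
  · have hu : ‖(↑u⁻¹ : A)‖ ≤ (1 - ‖q‖)⁻¹ := by
      have h := tsum_geometric_le_of_norm_lt_one (-q) hq1
      rwa [norm_one, sub_self, zero_add, norm_neg] at h
    calc ‖q * ↑u⁻¹‖ ≤ ‖q‖ * (1 - ‖q‖)⁻¹ :=
          (norm_mul_le _ _).trans (mul_le_mul_of_nonneg_left hu (norm_nonneg q))
      _ < 1 := by rw [mul_inv_lt_iff₀ (by linarith)]; linarith

noncomputable def forwardShift : lp (fun _ : ℕ => ℂ) ∞ →L[ℂ] lp (fun _ : ℕ => ℂ) ∞ :=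
  LinearMap.mkContinuous
    { toFun := fun x => ⟨fun n => Nat.casesOn n 0 x, memℓp_infty ⟨‖x‖, by
        rintro r ⟨_ | n, rfl⟩
        · exact norm_zero.trans_le (norm_nonneg x)
        · exact lp.norm_apply_le_norm ENNReal.top_ne_zero x n⟩⟩
      map_add' := fun x y => by
        ext (_ | n)
        exacts [(add_zero 0).symm, rfl]
      map_smul' := fun c x => by
        ext (_ | n)
        exacts [(smul_zero c).symm, rfl] }
    1
    (fun x => by
      rw [one_mul]
      refine lp.norm_le_of_forall_le (norm_nonneg x) fun n => ?_
      rcases n with _ | n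
      · exact norm_zero.trans_le (norm_nonneg x)
      · exact lp.norm_apply_le_norm ENNReal.top_ne_zero x n)

theorem norm_forwardShift_le : ‖forwardShift‖ ≤ 1 :=
  LinearMap.mkContinuous_norm_le _ zero_le_one _

theorem backwardShift_mul_forwardShift : backwardShift * forwardShift = 1 := by
  ext x n
  rfl

/-- If `|λ| > 2`, then `J_{I+λB}^mix(0) = l^∞(ℕ)`: for every `y` there is a sequence
`(w_n)` with `w_n → 0` and `(I+λB)^n w_n → y`. -/
theorem stmt3 (lam : ℂ) (hlam : 2 < ‖lam‖) :
    Jmix (1 + lam • backwardShift) (0 : lp (fun _ : ℕ => ℂ) ∞) = Set.univ := by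
  -- gives `NormOneClass` for the operators on `l^∞`
  have : Nontrivial (lp (fun _ : ℕ => ℂ) ∞) := NormOneClass.nontrivial
  have hc : 2 * ‖forwardShift‖ < ‖lam‖ := by linarith [norm_forwardShift_le]
  obtain ⟨S, hTS, hS⟩ :=
    exists_norm_lt_one_rightInverse_one_add_smul backwardShift_mul_forwardShift hc
  exact Jmix_zero_eq_univ_of_mul_eq_one hTS hS
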